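/- Two-point function of the grand canonical measure: Fix ρ ∈ (1/2,1). For ℓ ≥ 1 define the two-point function P_ℓ = Σ W_ρ^{ℓ+1}(σ), where the sum runs over all σ ∈ {0,1}^{Λ_{ℓ+1}} with σ(1) = σ(ℓ+1) = 1. Then P_ℓ = ρ² + (2ρ−1−ρ²)(1−1/ρ)^{ℓ−1} for all ℓ ≥ 1; in particular there exist constants C = C(ρ) > 0 and q = q(ρ) > 0 such that |P_ℓ − ρ²| ≤ q·e^{−Cℓ} for all ℓ ≥ 1. -/

import Mathlib

/-!
With `a = (1 - ρ) / ρ` and `b = (2ρ - 1) / ρ`, the cylinder weight factorizes over the bonds of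
`Λ_ℓ`: `W = (1 - ρ) a^(-σ(ℓ)) ∏ T(σ(x), σ(x+1))` for the transfer matrix `T = [[b, 1], [a, 0]]`
on the states (occupied, empty), whose zero entry encodes the exclusion of adjacent empty sites.
Summing over configurations turns products along paths into a matrix power, so
`P_ℓ = ρ (T^ℓ)₁₁`. Since `a + b = 1`, the eigenvalues of `T` are `1` and `-a = 1 - 1/ρ`, which
gives `(T^ℓ)₁₁ = ρ + (1 - ρ)(1 - 1/ρ)^ℓ`; for `ρ > 1/2` the second eigenvalue has modulus
`< 1`, whence the exponential decay.
-/

open scoped BigOperators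
open scoped Classical

namespace FEP

/-- The number of particles of `σ` in `Λ_ℓ = {1,…,ℓ}`. -/
def pcount (ℓ : ℕ) (σ : ℕ → Bool) : ℕ :=
  ∑ x ∈ Finset.Icc 1 ℓ, (if σ x then 1 else 0)

/-- `σ` has no two adjacent empty sites in `Λ_ℓ`. -/
def noAdj (ℓ : ℕ) (σ : ℕ → Bool) : Prop :=
  ∀ x ∈ Finset.Ico 1 ℓ, (σ x = true ∨ σ (x + 1) = true)

/-- The cylinder weight `W_ρ^ℓ(σ)` of the infinite-volume grand canonical measure `π_ρ`. -/
noncomputable def W (ρ : ℝ) (ℓ : ℕ) (σ : ℕ → Bool) : ℝ :=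
  if ∀ x ∈ Finset.Ico 1 ℓ, (σ x = true ∨ σ (x + 1) = true) then
    (1 - ρ) * ((1 - ρ) / ρ) ^ ((ℓ : ℤ) - 1 - (pcount ℓ σ : ℤ)) *
      ((2 * ρ - 1) / ρ) ^
        (2 * (pcount ℓ σ : ℤ) - (ℓ : ℤ) + 1 - (if σ 1 then 1 else 0) -
          (if σ ℓ then 1 else 0))
  else 0

/-- Extension of a configuration on `Λ_L` (indexed by `Fin L`, site `i` of `Λ_L` being
`⟨i-1,_⟩`) to a configuration `ℕ → Bool`. -/
def extSeg (L : ℕ) (σ : Fin L → Bool) : ℕ → Bool :=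
  fun x => if h : 1 ≤ x ∧ x ≤ L then σ ⟨x - 1, by omega⟩ else false

end FEP

namespace FEP

/-- The two-point function `P_ℓ = π_ρ(ξ(0) = ξ(ℓ) = 1)`, written as a sum of cylinder weights
on `Λ_{ℓ+1}` over the configurations with particles at both endpoints. -/
noncomputable def Pfun (ρ : ℝ) (ℓ : ℕ) : ℝ :=
  ∑ σ : Fin (ℓ + 1) → Bool,
    if extSeg (ℓ + 1) σ 1 = true ∧ extSeg (ℓ + 1) σ (ℓ + 1) = true then
      W ρ (ℓ + 1) (extSeg (ℓ + 1) σ)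
    else 0

end FEP

open Finset

theorem zpow_sum₀ {ι K : Type*} [CommGroupWithZero K] {a : K} (ha : a ≠ 0) (s : Finset ι)
    (f : ι → ℤ) : a ^ (∑ i ∈ s, f i) = ∏ i ∈ s, a ^ f i := by
  induction s using Finset.cons_induction with
  | empty => simp
  | cons i s hi ih => rw [sum_cons, prod_cons, zpow_add₀ ha, ih]

theorem Finset.sum_Ico_one_eq_sum_Icc_sub {M : Type*} [AddCommGroup M] (f : ℕ → M) {L : ℕ}
    (hL : 1 ≤ L) : ∑ x ∈ Ico 1 L, f x = ∑ x ∈ Icc 1 L, f x - f L := by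
  rw [← Ico_add_one_right_eq_Icc, sum_Ico_succ_top hL, add_sub_cancel_right]

theorem Finset.sum_Ico_one_shift_eq_sum_Icc_sub {M : Type*} [AddCommGroup M] (f : ℕ → M) {L : ℕ}
    (hL : 1 ≤ L) : ∑ x ∈ Ico 1 L, f (x + 1) = ∑ x ∈ Icc 1 L, f x - f 1 := by
  rw [sum_Ico_add', ← Ico_add_one_right_eq_Icc, sum_eq_sum_Ico_succ_bot (a := 1) (by omega),
    add_sub_cancel_left]

theorem Matrix.sum_prod_path_eq_pow_apply {ι R : Type*} [Fintype ι] [DecidableEq ι]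
    [CommSemiring R] (M : Matrix ι ι R) (n : ℕ) (i j : ι) :
    ∑ σ : Fin (n + 1) → ι,
      (if σ 0 = i ∧ σ (Fin.last n) = j then ∏ k : Fin n, M (σ k.castSucc) (σ k.succ) else 0) =
      (M ^ n) i j := by
  induction n generalizing i with
  | zero =>
    rw [← (Equiv.funUnique (Fin 1) ι).symm.sum_comp]
    simp [ite_and, Matrix.one_apply]
  | succ n ih =>
    rw [← (Fin.consEquiv fun _ => ι).sum_comp, Fintype.sum_prod_type, pow_succ', Matrix.mul_apply]
    simp only [Fin.consEquiv_apply, Fin.cons_zero, Fin.prod_univ_succ, Fin.castSucc_zero,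
      Fin.cons_succ, ← Fin.succ_castSucc, ← Fin.succ_last, ← ih, mul_sum, mul_ite, mul_zero]
    rw [Fintype.sum_eq_single i (fun x hx => by simp [hx]), sum_comm]
    simp [ite_and]

theorem exists_pow_sub_one_le_mul_exp {t : ℝ} (ht₀ : 0 < t) (ht₁ : t < 1) :
    ∃ C q : ℝ, 0 < C ∧ 0 < q ∧ ∀ ℓ : ℕ, 1 ≤ ℓ → t ^ (ℓ - 1) ≤ q * Real.exp (-C * ℓ) := by
  refine ⟨-Real.log t, t⁻¹, neg_pos.2 (Real.log_neg ht₀ ht₁), inv_pos.2 ht₀, fun ℓ hℓ => ?_⟩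
  rw [neg_neg, mul_comm (Real.log t), Real.exp_nat_mul, Real.exp_log ht₀,
    ← pow_sub_one_mul (show ℓ ≠ 0 by omega) t, mul_comm t⁻¹, mul_inv_cancel_right₀ ht₀.ne']

namespace FEP

def occ (b : Bool) : ℤ := if b then 1 else 0

theorem pcount_eq_sum_occ (L : ℕ) (σ : ℕ → Bool) :
    (pcount L σ : ℤ) = ∑ x ∈ Icc 1 L, occ (σ x) := by
  simp [pcount, occ]

theorem zpow_weight_eq_prod {K : Type*} [Field K] {a b : K} (ha : a ≠ 0) (hb : b ≠ 0) {L : ℕ}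
    (hL : 1 ≤ L) (σ : ℕ → Bool) :
    a ^ ((L : ℤ) - 1 - pcount L σ) * b ^ (2 * (pcount L σ : ℤ) - L + 1 - occ (σ 1) - occ (σ L)) =
      a ^ (-occ (σ L)) *
        ∏ x ∈ Ico 1 L, a ^ (1 - occ (σ x)) * b ^ (occ (σ x) + occ (σ (x + 1)) - 1) := by
  rw [prod_mul_distrib, ← zpow_sum₀ ha, ← zpow_sum₀ hb, ← mul_assoc, ← zpow_add₀ ha]
  congr 2
  · rw [sum_sub_distrib, sum_Ico_one_eq_sum_Icc_sub (fun x => occ (σ x)) hL, ← pcount_eq_sum_occ]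
    simp [Nat.cast_sub hL]
    ring
  · rw [sum_sub_distrib, sum_add_distrib, sum_Ico_one_eq_sum_Icc_sub (fun x => occ (σ x)) hL,
      sum_Ico_one_shift_eq_sum_Icc_sub (fun x => occ (σ x)) hL, ← pcount_eq_sum_occ]
    simp [Nat.cast_sub hL]
    ring

noncomputable def transferMatrix (ρ : ℝ) : Matrix Bool Bool ℝ :=
  Matrix.of fun s t =>
    if s then (if t then (2 * ρ - 1) / ρ else 1) else (if t then (1 - ρ) / ρ else 0)

theorem transferMatrix_eq_zpow (ρ : ℝ) {s t : Bool} (h : s = true ∨ t = true) :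
    transferMatrix ρ s t =
      ((1 - ρ) / ρ) ^ (1 - occ s) * ((2 * ρ - 1) / ρ) ^ (occ s + occ t - 1) := by
  cases s <;> cases t <;> simp_all [transferMatrix, occ]

theorem W_eq_mul_prod_transferMatrix {ρ : ℝ} (ha : (1 - ρ) / ρ ≠ 0) (hb : (2 * ρ - 1) / ρ ≠ 0)
    {L : ℕ} (hL : 1 ≤ L) (σ : ℕ → Bool) :
    W ρ L σ = (1 - ρ) * ((1 - ρ) / ρ) ^ (-occ (σ L)) *
      ∏ x ∈ Ico 1 L, transferMatrix ρ (σ x) (σ (x + 1)) := by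
  by_cases hadj : ∀ x ∈ Ico 1 L, σ x = true ∨ σ (x + 1) = true
  · rw [W, if_pos hadj]
    simp only [← occ.eq_def]
    rw [mul_assoc, zpow_weight_eq_prod ha hb hL, mul_assoc]
    congr 2
    exact prod_congr rfl fun x hx => (transferMatrix_eq_zpow ρ (hadj x hx)).symm
  · rw [W, if_neg hadj]
    push Not at hadj
    obtain ⟨x, hx, hx₀, hx₁⟩ := hadj
    rw [prod_eq_zero hx (by simp [transferMatrix, hx₀, hx₁]), mul_zero]

theorem extSeg_val_add_one {L : ℕ} (σ : Fin L → Bool) (k : Fin L) :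
    extSeg L σ (k + 1) = σ k := by
  simp [extSeg, Nat.succ_le_of_lt k.isLt]

theorem prod_Ico_extSeg {M : Type*} [CommMonoid M] (f : Bool → Bool → M) {n : ℕ}
    (σ : Fin (n + 1) → Bool) :
    ∏ x ∈ Ico 1 (n + 1), f (extSeg (n + 1) σ x) (extSeg (n + 1) σ (x + 1)) =
      ∏ k : Fin n, f (σ k.castSucc) (σ k.succ) := by
  rw [prod_Ico_eq_prod_range, add_tsub_cancel_right, prod_range]
  refine Fintype.prod_congr _ _ fun k => ?_
  rw [add_comm 1, ← extSeg_val_add_one σ k.castSucc, ← extSeg_val_add_one σ k.succ]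
  rfl

theorem Pfun_eq_mul_transferMatrix_pow {ρ : ℝ} (ha : (1 - ρ) / ρ ≠ 0) (hb : (2 * ρ - 1) / ρ ≠ 0)
    (ℓ : ℕ) : Pfun ρ ℓ = ρ * (transferMatrix ρ ^ ℓ) true true := by
  have hρ₁ : 1 - ρ ≠ 0 := by rintro h; simp [h] at ha
  rw [Pfun, ← Matrix.sum_prod_path_eq_pow_apply, mul_sum]
  refine Fintype.sum_congr _ _ fun σ => ?_
  have h₁ : extSeg (ℓ + 1) σ 1 = σ 0 := extSeg_val_add_one σ 0
  have hℓ : extSeg (ℓ + 1) σ (ℓ + 1) = σ (Fin.last ℓ) := extSeg_val_add_one σ (Fin.last ℓ)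
  rw [h₁, hℓ]
  split_ifs with h
  · rw [W_eq_mul_prod_transferMatrix ha hb (by omega), prod_Ico_extSeg (transferMatrix ρ), hℓ, h.2,
      occ, if_pos rfl, zpow_neg_one, inv_div, mul_div_cancel₀ _ hρ₁]
  · rw [mul_zero]

theorem transferMatrix_pow_apply {ρ : ℝ} (hρ : ρ ≠ 0) (n : ℕ) :
    (transferMatrix ρ ^ n) true true = ρ + (1 - ρ) * (1 - 1 / ρ) ^ n ∧
      (transferMatrix ρ ^ n) true false = ρ - ρ * (1 - 1 / ρ) ^ n := by
  have hr : ρ * (1 - 1 / ρ) = ρ - 1 := by field_simp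
  generalize 1 - 1 / ρ = r at hr ⊢
  induction n with
  | zero => simp
  | succ n ih =>
    rw [pow_succ, Matrix.mul_apply, Matrix.mul_apply, Fintype.sum_bool, Fintype.sum_bool, ih.1,
      ih.2]
    simp only [transferMatrix, Matrix.of_apply, if_true, if_false, Bool.false_eq_true, pow_succ]
    constructor
    · field_simp
      linear_combination (ρ - 1) * r ^ n * hr
    · field_simp
      linear_combination r ^ n * hr

theorem Pfun_eq {ρ : ℝ} (ha : (1 - ρ) / ρ ≠ 0) (hb : (2 * ρ - 1) / ρ ≠ 0) {ℓ : ℕ} (hℓ : 1 ≤ ℓ) :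
    Pfun ρ ℓ = ρ ^ 2 + (2 * ρ - 1 - ρ ^ 2) * (1 - 1 / ρ) ^ (ℓ - 1) := by
  have hρ : ρ ≠ 0 := by rintro rfl; simp at ha
  obtain ⟨n, rfl⟩ := Nat.exists_eq_add_of_le' hℓ
  rw [Pfun_eq_mul_transferMatrix_pow ha hb, (transferMatrix_pow_apply hρ _).1,
    Nat.add_sub_cancel, pow_succ]
  field_simp
  ring

/-- **Two-point function of the grand canonical measure:** explicit formula and exponential
decay of correlations. -/
theorem two_point_function (ρ : ℝ) (hρ : ρ ∈ Set.Ioo (1/2 : ℝ) 1) :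
    (∀ ℓ : ℕ, 1 ≤ ℓ →
      Pfun ρ ℓ = ρ ^ 2 + (2 * ρ - 1 - ρ ^ 2) * (1 - 1 / ρ) ^ (ℓ - 1)) ∧
    ∃ C q : ℝ, 0 < C ∧ 0 < q ∧
      ∀ ℓ : ℕ, 1 ≤ ℓ → |Pfun ρ ℓ - ρ ^ 2| ≤ q * Real.exp (-C * ℓ) := by
  obtain ⟨hρ₁, hρ₂⟩ := hρ
  have hρ₀ : 0 < ρ := by linarith
  have hP : ∀ ℓ : ℕ, 1 ≤ ℓ →
      Pfun ρ ℓ = ρ ^ 2 + (2 * ρ - 1 - ρ ^ 2) * (1 - 1 / ρ) ^ (ℓ - 1) :=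
    fun ℓ hℓ => Pfun_eq (div_ne_zero (by linarith) hρ₀.ne') (div_ne_zero (by linarith) hρ₀.ne') hℓ
  refine ⟨hP, ?_⟩
  have ht₀ : 0 < 1 / ρ - 1 := by rw [sub_pos, lt_one_div one_pos hρ₀, div_one]; exact hρ₂
  have ht₁ : 1 / ρ - 1 < 1 := by rw [div_sub_one hρ₀.ne', div_lt_one hρ₀]; linarith
  obtain ⟨C, q, hC, hq, hdecay⟩ := exists_pow_sub_one_le_mul_exp ht₀ ht₁
  refine ⟨C, (1 - ρ) ^ 2 * q, hC, mul_pos (pow_pos (by linarith) 2) hq, fun ℓ hℓ => ?_⟩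
  calc |Pfun ρ ℓ - ρ ^ 2| = (1 - ρ) ^ 2 * (1 / ρ - 1) ^ (ℓ - 1) := by
        rw [hP ℓ hℓ, add_sub_cancel_left, show 2 * ρ - 1 - ρ ^ 2 = -(1 - ρ) ^ 2 by ring, abs_mul,
          abs_neg, abs_sq, abs_pow, abs_sub_comm, abs_of_pos ht₀]
    _ ≤ (1 - ρ) ^ 2 * (q * Real.exp (-C * ℓ)) := by gcongr; exact hdecay ℓ hℓ
    _ = (1 - ρ) ^ 2 * q * Real.exp (-C * ℓ) := by ring

end FEP
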